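/- Assume M has no duplicate literals. Then clause S subsumes clause M if and only if the SAT encoding 𝓔_S(S,M) — the conjunction of positive compatibility (b⁺ᵢⱼ → Σ⁺ᵢⱼ ⊆ σ), SAT-based partial completeness (⋀ᵢ ⋁ⱼ b⁺ᵢⱼ), and SAT-based multiplicity conservation (for each j, at most one of {b⁺ᵢⱼ : i} is true) — is satisfiable, where satisfiability means there exist a Boolean assignment to the variables b⁺ᵢⱼ and a substitution σ jointly satisfying all constraints. -/

import Mathlib

/-- First-order terms over variables `V`. -/
inductive Trm (V : Type) : Type
  | var : V → Trm V
  | fn : ℕ → Trm V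
  | app : Trm V → Trm V → Trm V
deriving DecidableEq

/-- Applying a (total) substitution to a term. -/
def Trm.subst {V : Type} (σ : V → Trm V) : Trm V → Trm V
  | .var x => σ x
  | .fn f => .fn f
  | .app t u => .app (t.subst σ) (u.subst σ)

/-- A first-order literal: a polarity, a predicate symbol and an argument term. -/
structure Lit (V : Type) where
  pos : Bool
  pred : ℕ
  arg : Trm V
deriving DecidableEq

/-- The complement of a literal. -/
def Lit.neg {V : Type} (l : Lit V) : Lit V := { l with pos := !l.pos }

/-- Applying a substitution to a literal. -/
def Lit.subst {V : Type} (σ : V → Trm V) (l : Lit V) : Lit V :=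
  { l with arg := l.arg.subst σ }

/-- A clause is a multiset of literals. -/
abbrev Clause (V : Type) := Multiset (Lit V)

/-- Applying a substitution to a clause. -/
def Clause.subst {V : Type} (σ : V → Trm V) (C : Clause V) : Clause V :=
  C.map (Lit.subst σ)

/-- `S` subsumes `M`: some substitution maps `S` to a sub-multiset of `M`. -/
def Subsumes {V : Type} (S M : Clause V) : Prop :=
  ∃ σ : V → Trm V, Clause.subst σ S ≤ M

/-- `S` and `M` are side and main premises of subsumption resolution:
there are `σ`, a nonempty `S' ⊆ S` and `m' ∈ M` with `σ(S') = {¬m'}` and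
`σ(S \ S') ⊆ M \ {m'}`. -/
def SubRes {V : Type} [DecidableEq V] (S M : Clause V) : Prop :=
  ∃ (σ : V → Trm V) (S' : Clause V) (m' : Lit V),
    S' ≤ S ∧ S' ≠ 0 ∧ m' ∈ M ∧
    (∀ l ∈ S', Lit.subst σ l = m'.neg) ∧
    (∀ l ∈ S - S', Lit.subst σ l ∈ M.erase m')

/-- Partial substitutions. -/
abbrev PSub (V : Type) := V → Option (Trm V)

/-- Partial application of a partial substitution to a term. -/
def Trm.psubst {V : Type} (θ : PSub V) : Trm V → Option (Trm V)
  | .var x => θ x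
  | .fn f => some (.fn f)
  | .app t u => (t.psubst θ).bind fun t' => (u.psubst θ).map fun u' => .app t' u'

/-- Partial application of a partial substitution to a literal. -/
def Lit.psubst {V : Type} (θ : PSub V) (l : Lit V) : Option (Lit V) :=
  (l.arg.psubst θ).map fun t => { l with arg := t }

/-- `θ ⊆ σ`: the total substitution `σ` extends the partial substitution `θ`. -/
def PSub.le {V : Type} (θ : PSub V) (σ : V → Trm V) : Prop :=
  ∀ x t, θ x = some t → σ x = t

/-- The clause with literals `s 0, …, s (k-1)`. -/
def clauseOfFn {V : Type} {k : ℕ} (s : Fin k → Lit V) : Clause V :=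
  (List.ofFn s : List (Lit V))

/-- The indexed clause `m` has no duplicate literals. -/
def NoDupIdx {V : Type} {n : ℕ} (m : Fin n → Lit V) : Prop :=
  ∀ j j' : Fin n, m j = m j' → j = j'

/-- The indexed clause `m` has no duplicate atoms: no two (distinct) literals are
equal or complementary. -/
def NoDupAtomsIdx {V : Type} {n : ℕ} (m : Fin n → Lit V) : Prop :=
  (∀ j j' : Fin n, m j = m j' → j = j') ∧ (∀ j j' : Fin n, m j ≠ (m j').neg)

/-- `Sp` is the family of positive matchers `Σ⁺ᵢⱼ`: `Sp i j = some θ` exactly when a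
substitution matching `sᵢ` to `mⱼ` exists, in which case `θ` is such a (partial)
matcher and every total match is an extension of it. -/
def IsMatcherFamilyPos {V : Type} {k n : ℕ} (s : Fin k → Lit V) (m : Fin n → Lit V)
    (Sp : Fin k → Fin n → Option (PSub V)) : Prop :=
  (∀ i j θ, Sp i j = some θ → Lit.psubst θ (s i) = some (m j)) ∧
  (∀ i j (σ : V → Trm V), Lit.subst σ (s i) = m j → ∃ θ, Sp i j = some θ ∧ PSub.le θ σ)

/-- `Sn` is the family of negative matchers `Σ⁻ᵢⱼ` (matching `sᵢ` to `¬mⱼ`). -/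
def IsMatcherFamilyNeg {V : Type} {k n : ℕ} (s : Fin k → Lit V) (m : Fin n → Lit V)
    (Sn : Fin k → Fin n → Option (PSub V)) : Prop :=
  (∀ i j θ, Sn i j = some θ → Lit.psubst θ (s i) = some ((m j).neg)) ∧
  (∀ i j (σ : V → Trm V), Lit.subst σ (s i) = (m j).neg → ∃ θ, Sn i j = some θ ∧ PSub.le θ σ)

/-- The (predicate, polarity) header of a literal. -/
def Lit.header {V : Type} (l : Lit V) : ℕ × Bool := (l.pred, l.pos)

open Function

/-!
Since `M` is duplicate-free, `σ(S) ⊑ M` holds exactly when `i ↦ j` with `σ(sᵢ) = mⱼ` can be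
chosen injectively. The true variables `b⁺ᵢⱼ` are the graph of such an injection: partial
completeness makes it total and the at-most-one constraints make it injective. Finally, the
matcher `Σ⁺ᵢⱼ` is most general, so `Σ⁺ᵢⱼ ⊆ σ` is equivalent to `σ(sᵢ) = mⱼ`.
-/

theorem Trm.subst_eq_of_psubst_eq_some {V : Type} {θ : PSub V} {σ : V → Trm V}
    (hθσ : PSub.le θ σ) : ∀ {t t' : Trm V}, Trm.psubst θ t = some t' → Trm.subst σ t = t'
  | .var x, t', h => hθσ x t' h
  | .fn f, t', h => by simpa [Trm.psubst, Trm.subst] using h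
  | .app a b, t', h => by
    simp only [Trm.psubst, Option.bind_eq_some_iff, Option.map_eq_some_iff] at h
    obtain ⟨a', ha, b', hb, rfl⟩ := h
    simp [Trm.subst, subst_eq_of_psubst_eq_some hθσ ha, subst_eq_of_psubst_eq_some hθσ hb]

theorem Lit.subst_eq_of_psubst_eq_some {V : Type} {θ : PSub V} {σ : V → Trm V}
    (hθσ : PSub.le θ σ) {l l' : Lit V} (h : Lit.psubst θ l = some l') : Lit.subst σ l = l' := by
  simp only [Lit.psubst, Option.map_eq_some_iff] at h
  obtain ⟨t, ht, rfl⟩ := h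
  simp [Lit.subst, Trm.subst_eq_of_psubst_eq_some hθσ ht]

theorem IsMatcherFamilyPos.exists_le_iff {V : Type} {k n : ℕ} {s : Fin k → Lit V}
    {m : Fin n → Lit V} {Sp : Fin k → Fin n → Option (PSub V)} (hSp : IsMatcherFamilyPos s m Sp)
    (σ : V → Trm V) (i : Fin k) (j : Fin n) :
    (∃ θ, Sp i j = some θ ∧ PSub.le θ σ) ↔ Lit.subst σ (s i) = m j :=
  ⟨fun ⟨θ, hθ, hθσ⟩ => Lit.subst_eq_of_psubst_eq_some hθσ (hSp.1 i j θ hθ), hSp.2 i j σ⟩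

theorem clauseOfFn_eq_map {V : Type} {k : ℕ} (s : Fin k → Lit V) :
    clauseOfFn s = Finset.univ.val.map s := by
  simp [clauseOfFn, List.ofFn_eq_map]

theorem Clause.subst_clauseOfFn {V : Type} {k : ℕ} (σ : V → Trm V) (s : Fin k → Lit V) :
    Clause.subst σ (clauseOfFn s) = clauseOfFn (Lit.subst σ ∘ s) := by
  simp [Clause.subst, clauseOfFn, List.map_ofFn]

theorem clauseOfFn_nodup_iff {V : Type} {k : ℕ} {s : Fin k → Lit V} :
    (clauseOfFn s).Nodup ↔ Injective s := by
  rw [clauseOfFn, Multiset.coe_nodup, List.nodup_ofFn]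

theorem clauseOfFn_le_iff {V : Type} {k n : ℕ} {l : Fin k → Lit V} {m : Fin n → Lit V}
    (hm : Injective m) :
    clauseOfFn l ≤ clauseOfFn m ↔ ∃ f : Fin k → Fin n, Injective f ∧ ∀ i, l i = m (f i) := by
  constructor
  · intro hle
    have hl : Injective l :=
      clauseOfFn_nodup_iff.1 (Multiset.nodup_of_le hle (clauseOfFn_nodup_iff.2 hm))
    have hmem (i : Fin k) : ∃ j, m j = l i := by
      have : l i ∈ clauseOfFn m := Multiset.mem_of_le hle (by simp [clauseOfFn_eq_map])
      simpa [clauseOfFn_eq_map] using this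
    choose f hf using hmem
    refine ⟨f, fun i i' h => hl ?_, fun i => (hf i).symm⟩
    rw [← hf i, ← hf i', h]
  · rintro ⟨f, hf, hlf⟩
    have hl : l = m ∘ f := funext hlf
    rw [hl, clauseOfFn_eq_map, clauseOfFn_eq_map, ← Multiset.map_map]
    exact Multiset.map_le_map
      (Finset.val_le_iff.2 (Finset.subset_univ (Finset.univ.map ⟨f, hf⟩)))

theorem exists_injective_iff_exists_bool_matching {α β : Type*} (P : α → β → Prop) :
    (∃ f : α → β, Injective f ∧ ∀ a, P a (f a)) ↔
      ∃ b : α → β → Bool, (∀ a c, b a c = true → P a c) ∧ (∀ a, ∃ c, b a c = true) ∧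
        (∀ c, ∀ a a', b a c = true → b a' c = true → a = a') := by
  classical
  constructor
  · rintro ⟨f, hf, hP⟩
    refine ⟨fun a c => decide (f a = c), ?_, fun a => ⟨f a, by simp⟩, ?_⟩
    · intro a c h
      rw [← of_decide_eq_true h]
      exact hP a
    · intro c a a' ha ha'
      exact hf ((of_decide_eq_true ha).trans (of_decide_eq_true ha').symm)
  · rintro ⟨b, hP, hcover, hamo⟩
    choose f hf using hcover
    exact ⟨f, fun a a' h => hamo (f a) a a' (hf a) (h ▸ hf a'), fun a => hP a (f a) (hf a)⟩

/-- Soundness of the SAT-based subsumption encoding `𝓔_S(S,M)`: with `M`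
duplicate-free, `S` subsumes `M` iff the encoding is satisfiable. -/
theorem stmt3 {V : Type} {k n : ℕ} (s : Fin k → Lit V) (m : Fin n → Lit V)
    (hM : NoDupIdx m)
    (Sp : Fin k → Fin n → Option (PSub V)) (hSp : IsMatcherFamilyPos s m Sp) :
    Subsumes (clauseOfFn s) (clauseOfFn m) ↔
      ∃ (σ : V → Trm V) (b : Fin k → Fin n → Bool),
        (∀ i j, b i j = true → ∃ θ, Sp i j = some θ ∧ PSub.le θ σ) ∧
        (∀ i, ∃ j, b i j = true) ∧
        (∀ j, ∀ i i', b i j = true → b i' j = true → i = i') := by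
  simp only [hSp.exists_le_iff, ← exists_injective_iff_exists_bool_matching]
  unfold Subsumes
  simp only [Clause.subst_clauseOfFn, clauseOfFn_le_iff hM, comp_apply]
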